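/- Block upper-triangular matrix exponential formula: let A₁₁ be an m×m real matrix, A₂₂ an n×n real matrix, and A₁₂ an m×n real matrix, and for t ∈ ℝ write exp( t·[[A₁₁, A₁₂],[0, A₂₂]] ) = [[F₁₁(t), F₁₂(t)],[0, F₂₂(t)]]. Then F₁₁(t) = exp(t·A₁₁), F₂₂(t) = exp(t·A₂₂), and F₁₂(t) = ∫_0^t exp((t−s)·A₁₁)·A₁₂·exp(s·A₂₂) ds. -/

import Mathlib

/-!
Split `M = [[A₁₁, A₁₂], [0, A₂₂]]` as `N + P` with `N = [[A₁₁, 0], [0, A₂₂]]` and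
`P = [[0, A₁₂], [0, 0]]`. The Duhamel function
`G u = exp (u • N) + ∫₀ᵘ exp ((u - s) • N) * P * exp (s • N) ds`
satisfies `G' = N G + P exp (u • N)`, and `P G u = P exp (u • N)` because `P X P = 0` for every
block-diagonal `X`. Hence `G' = M G` and `G 0 = 1`, so `G u = exp (u • M)`, since
`exp (-u • M) * G u` has zero derivative. Reading off the blocks gives the formula.
-/

open Matrix MeasureTheory NormedSpace

section NormedAlgebra

variable {𝔸 : Type*} [NormedRing 𝔸] [NormedAlgebra ℝ 𝔸] [CompleteSpace 𝔸]

theorem intervalIntegral.integral_const_mul_of_intervalIntegrable {f : ℝ → 𝔸} {a b : ℝ}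
    (hf : IntervalIntegrable f volume a b) (c : 𝔸) :
    ∫ x in a..b, c * f x = c * ∫ x in a..b, f x :=
  (ContinuousLinearMap.mul ℝ 𝔸 c).intervalIntegral_comp_comm hf

theorem exp_sub_smul (N : 𝔸) (u s : ℝ) :
    exp ((u - s) • N) = exp (u • N) * exp (s • -N) := by
  -- `exp_add_of_commute` is stated for normed `ℚ`-algebras.
  let +nondep : NormedAlgebra ℚ 𝔸 := .restrictScalars ℚ ℝ 𝔸
  rw [sub_eq_add_neg, add_smul, neg_smul, ← smul_neg,
    exp_add_of_commute (((Commute.refl N).neg_right.smul_right s).smul_left u)]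

theorem continuous_exp_smul (N : 𝔸) : Continuous fun u : ℝ => exp (u • N) :=
  continuous_iff_continuousAt.2 fun u => (hasDerivAt_exp_smul_const' N u).continuousAt

theorem eq_exp_smul_mul_of_hasDerivAt {G : ℝ → 𝔸} {M : 𝔸}
    (hG : ∀ u, HasDerivAt G (M * G u) u) (t : ℝ) : G t = exp (t • M) * G 0 := by
  have hconst : ∀ u, HasDerivAt (fun v => exp (v • -M) * G v) 0 u := fun u =>
    ((hasDerivAt_exp_smul_const' (-M) u).mul (hG u)).congr_deriv <| by
      rw [← mul_assoc, ((Commute.refl M).neg_left.smul_left u).exp_left.eq]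
      noncomm_ring
  have hGt := is_const_of_deriv_eq_zero (fun u => (hconst u).differentiableAt)
    (fun u => (hconst u).deriv) t 0
  calc G t = exp ((t - t) • M) * G t := by rw [sub_self, zero_smul, exp_zero, one_mul]
    _ = exp (t • M) * (exp (t • -M) * G t) := by rw [exp_sub_smul, mul_assoc]
    _ = exp (t • M) * G 0 := by rw [hGt, zero_smul, exp_zero, one_mul]

theorem hasDerivAt_integral_exp_sub_smul_mul {N : 𝔸} {f : ℝ → 𝔸} (hf : Continuous f) (u : ℝ) :
    HasDerivAt (fun u => ∫ s in (0 : ℝ)..u, exp ((u - s) • N) * f s)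
      (N * (∫ s in (0 : ℝ)..u, exp ((u - s) • N) * f s) + f u) u := by
  have hg : Continuous fun s => exp (s • -N) * f s := (continuous_exp_smul (-N)).mul hf
  have hfactor : ∀ v : ℝ, ∫ s in (0 : ℝ)..v, exp ((v - s) • N) * f s =
      exp (v • N) * ∫ s in (0 : ℝ)..v, exp (s • -N) * f s := fun v => by
    simp_rw [exp_sub_smul, mul_assoc]
    exact intervalIntegral.integral_const_mul_of_intervalIntegrable (hg.intervalIntegrable 0 v) _
  rw [funext hfactor, hfactor u]
  refine ((hasDerivAt_exp_smul_const' N u).mul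
    (hg.integral_hasStrictDerivAt 0 u).hasDerivAt).congr_deriv ?_
  rw [← mul_assoc, ← exp_sub_smul, sub_self, zero_smul, exp_zero, one_mul, mul_assoc]

theorem exp_smul_add_eq_add_integral {N P : 𝔸} (hP : ∀ r : ℝ, P * exp (r • N) * P = 0)
    (t : ℝ) : exp (t • (N + P)) =
      exp (t • N) + ∫ s in (0 : ℝ)..t, exp ((t - s) • N) * (P * exp (s • N)) := by
  have hf : Continuous fun s : ℝ => P * exp (s • N) := continuous_const.mul (continuous_exp_smul N)
  have hPI : ∀ u : ℝ, P * ∫ s in (0 : ℝ)..u, exp ((u - s) • N) * (P * exp (s • N)) = 0 :=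
    fun u => by
      have hint : IntervalIntegrable (fun s => exp ((u - s) • N) * (P * exp (s • N))) volume 0 u :=
        ((continuous_exp_smul N).comp (continuous_const.sub continuous_id)).mul hf
          |>.intervalIntegrable 0 u
      rw [← intervalIntegral.integral_const_mul_of_intervalIntegrable hint]
      simp only [← mul_assoc, hP, zero_mul, intervalIntegral.integral_zero]
  have hG : ∀ u : ℝ, HasDerivAt
      (fun u => exp (u • N) + ∫ s in (0 : ℝ)..u, exp ((u - s) • N) * (P * exp (s • N)))
      ((N + P) * (exp (u • N) + ∫ s in (0 : ℝ)..u, exp ((u - s) • N) * (P * exp (s • N)))) u :=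
    fun u => ((hasDerivAt_exp_smul_const' N u).add
      (hasDerivAt_integral_exp_sub_smul_mul hf u)).congr_deriv <| by
        rw [add_mul, mul_add P, hPI, mul_add N]; abel
  simpa using (eq_exp_smul_mul_of_hasDerivAt hG t).symm

end NormedAlgebra

namespace Matrix

-- Matrices carry no canonical norm; any choice gives the same `exp` and the same integrals.
open scoped Matrix.Norms.L2Operator

theorem intervalIntegral_apply {m n : Type*} [Fintype m] [Fintype n] [DecidableEq n]
    {F : ℝ → Matrix m n ℝ} {a b : ℝ} (hF : IntervalIntegrable F volume a b) (i : m) (j : n) :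
    (∫ x in a..b, F x) i j = ∫ x in a..b, F x i j :=
  ((LinearMap.toContinuousLinearMap (entryLinearMap ℝ ℝ i j)).intervalIntegral_comp_comm hF).symm

variable {m n : Type*} [Fintype m] [DecidableEq m] [Fintype n] [DecidableEq n]

theorem exp_fromBlocks_diagonal {𝕜 : Type*} [RCLike 𝕜] (A : Matrix m m 𝕜) (D : Matrix n n 𝕜) :
    exp (fromBlocks A 0 0 D) = fromBlocks (exp A) 0 0 (exp D) := by
  have hA := exp_series_hasSum_exp' (𝕂 := 𝕜) A
  have hD := exp_series_hasSum_exp' (𝕂 := 𝕜) D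
  refine (exp_series_hasSum_exp' (𝕂 := 𝕜) (fromBlocks A 0 0 D)).unique ?_
  simp only [fromBlocks_diagonal_pow, fromBlocks_smul, smul_zero]
  refine Pi.hasSum.2 fun i => Pi.hasSum.2 fun j => ?_
  rcases i with i | i <;> rcases j with j | j
  · exact Pi.hasSum.1 (Pi.hasSum.1 hA i) j
  · exact hasSum_zero
  · exact hasSum_zero
  · exact Pi.hasSum.1 (Pi.hasSum.1 hD i) j

theorem continuous_exp_sub_smul_mul_mul_exp_smul (A : Matrix m m ℝ) (B : Matrix m n ℝ)
    (D : Matrix n n ℝ) (t : ℝ) :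
    Continuous fun s : ℝ => exp ((t - s) • A) * B * exp (s • D) :=
  (((continuous_exp_smul A).comp (continuous_const.sub continuous_id)).matrix_mul
    continuous_const).matrix_mul (continuous_exp_smul D)

theorem exp_smul_fromBlocks_zero₂₁ (A : Matrix m m ℝ) (B : Matrix m n ℝ) (D : Matrix n n ℝ)
    (t : ℝ) : exp (t • fromBlocks A B 0 D) = fromBlocks (exp (t • A))
      (∫ s in (0 : ℝ)..t, exp ((t - s) • A) * B * exp (s • D)) 0 (exp (t • D)) := by
  have hsplit : fromBlocks A B 0 D = fromBlocks A 0 0 D + fromBlocks 0 B 0 0 := by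
    simp [fromBlocks_add]
  have hexp : ∀ r : ℝ,
      exp (r • fromBlocks A 0 0 D) = fromBlocks (exp (r • A)) 0 0 (exp (r • D)) := fun r => by
    simp only [fromBlocks_smul, smul_zero, exp_fromBlocks_diagonal]
  rw [hsplit, exp_smul_add_eq_add_integral fun r => by simp [hexp, fromBlocks_multiply]]
  simp only [hexp, fromBlocks_multiply, Matrix.zero_mul, Matrix.mul_zero, add_zero, zero_add,
    ← Matrix.mul_assoc]
  have hF := continuous_exp_sub_smul_mul_mul_exp_smul A B D t
  have hG : Continuous fun s : ℝ => fromBlocks (0 : Matrix m m ℝ)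
      (exp ((t - s) • A) * B * exp (s • D)) (0 : Matrix n m ℝ) (0 : Matrix n n ℝ) :=
    continuous_const.matrix_fromBlocks hF continuous_const continuous_const
  ext (i | i) (j | j) <;>
    simp [intervalIntegral_apply (hG.intervalIntegrable 0 t),
      intervalIntegral_apply (hF.intervalIntegrable 0 t)]

end Matrix

theorem block_triangular_matrix_exponential
    (m n : ℕ) (A₁₁ : Matrix (Fin m) (Fin m) ℝ) (A₂₂ : Matrix (Fin n) (Fin n) ℝ)
    (A₁₂ : Matrix (Fin m) (Fin n) ℝ) :
    ∀ t : ℝ,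
      NormedSpace.exp (t • Matrix.fromBlocks A₁₁ A₁₂ 0 A₂₂)
        = Matrix.fromBlocks
            (NormedSpace.exp (t • A₁₁))
            (Matrix.of fun i j => ∫ s in (0 : ℝ)..t,
              (NormedSpace.exp ((t - s) • A₁₁) * A₁₂ * NormedSpace.exp (s • A₂₂)) i j)
            0
            (NormedSpace.exp (t • A₂₂)) := by
  intro t
  open scoped Matrix.Norms.L2Operator in
  · rw [exp_smul_fromBlocks_zero₂₁]
    congr 1
    ext i j
    exact intervalIntegral_apply
      ((continuous_exp_sub_smul_mul_mul_exp_smul A₁₁ A₁₂ A₂₂ t).intervalIntegrable 0 t) i j
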